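/- arXiv:1106.5589 — 8 statements merged into one kernel-verified Lean document; each statement's English description precedes it below -/
import Mathlib

section
/- For every positive integer n ≥ 1 and every positive integer k, the k-tuple domatic number of the complete graph K_n equals ⌊n/k⌋. -/
variable {V : Type*}

/-- `S` is a `k`-tuple dominating set of `G`: every vertex outside `S` has at least `k`
neighbors in `S`, and every vertex of `S` has at least `k - 1` neighbors in `S`. -/
def IsKTupleDomSet (G : SimpleGraph V) (k : ℕ) (S : Set V) : Prop :=
  (∀ v ∉ S, k ≤ (S ∩ G.neighborSet v).ncard) ∧
  (∀ v ∈ S, k - 1 ≤ (S ∩ G.neighborSet v).ncard)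

/-- A partition of the vertex set of `G` into `k`-tuple dominating sets. -/
def IsKDomaticPartition (G : SimpleGraph V) (k : ℕ) (P : Set (Set V)) : Prop :=
  Setoid.IsPartition P ∧ ∀ S ∈ P, IsKTupleDomSet G k S

/-- The `k`-tuple domination number: minimum cardinality of a `k`-tuple dominating set. -/
noncomputable def kDomNum (G : SimpleGraph V) (k : ℕ) : ℕ :=
  sInf {m | ∃ S : Set V, IsKTupleDomSet G k S ∧ S.ncard = m}

/-- The `k`-tuple domatic number: the largest number of sets in a partition of the
vertex set into `k`-tuple dominating sets. -/
noncomputable def kDomaticNum (G : SimpleGraph V) (k : ℕ) : ℕ :=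
  sSup {d | ∃ P : Set (Set V), IsKDomaticPartition G k P ∧ P.ncard = d}

lemma top_inter_neighborSet {n : ℕ} (S : Set (Fin n)) (v : Fin n) :
    S ∩ (⊤ : SimpleGraph (Fin n)).neighborSet v = S \ {v} := by
  ext w
  simp [SimpleGraph.neighborSet, eq_comm, and_comm]

/-- In the complete graph, any set of size at least `k` is `k`-tuple dominating. -/
lemma isKTupleDomSet_of_ncard {n k : ℕ} {S : Set (Fin n)} (h : k ≤ S.ncard) :
    IsKTupleDomSet (⊤ : SimpleGraph (Fin n)) k S := by
  constructor
  · intro v hv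
    rw [top_inter_neighborSet]
    rwa [Set.diff_singleton_eq_self hv]
  · intro v hv
    rw [top_inter_neighborSet, Set.ncard_diff_singleton_of_mem hv]
    omega

/-- In any graph, a nonempty `k`-tuple dominating set has size at least `k`. -/
lemma ncard_ge_of_isKTupleDomSet {n k : ℕ} (hk : 1 ≤ k) {S : Set (Fin n)}
    (h : IsKTupleDomSet (⊤ : SimpleGraph (Fin n)) k S) (hS : S.Nonempty) : k ≤ S.ncard := by
  obtain ⟨v, hv⟩ := hS
  have := h.2 v hv
  rw [top_inter_neighborSet, Set.ncard_diff_singleton_of_mem hv] at this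
  have hpos : 0 < S.ncard := (Set.ncard_pos (Set.toFinite S)).2 ⟨v, hv⟩
  omega

lemma partition_card_le {n k : ℕ} (hk : 1 ≤ k) {P : Set (Set (Fin n))}
    (hP : IsKDomaticPartition (⊤ : SimpleGraph (Fin n)) k P) : P.ncard ≤ n / k := by
  classical
  obtain ⟨⟨hne, hcov⟩, hdom⟩ := hP
  have hPfin : P.Finite := Set.toFinite P
  set Q : Finset (Set (Fin n)) := hPfin.toFinset with hQ
  have hmem : ∀ S, S ∈ Q ↔ S ∈ P := fun S => hPfin.mem_toFinset
  -- pairwise disjoint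
  have hdisj : ∀ S ∈ Q, ∀ T ∈ Q, S ≠ T → Disjoint S.toFinset T.toFinset := by
    intro S hS T hT hST
    rw [Finset.disjoint_left]
    intro a haS haT
    rw [Set.mem_toFinset] at haS haT
    obtain ⟨b, _, hb⟩ := hcov a
    exact hST ((hb S ⟨(hmem S).1 hS, haS⟩).trans (hb T ⟨(hmem T).1 hT, haT⟩).symm)
  have hcard : ∑ S ∈ Q, S.toFinset.card = (Q.biUnion (fun S => S.toFinset)).card :=
    (Finset.card_biUnion hdisj).symm
  have hle : (Q.biUnion (fun S => S.toFinset)).card ≤ n := by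
    simpa using Finset.card_le_card (Finset.subset_univ (Q.biUnion (fun S => S.toFinset)))
  have hterm : ∀ S ∈ Q, k ≤ S.toFinset.card := by
    intro S hS
    have hSP := (hmem S).1 hS
    have hSne : S.Nonempty := Set.nonempty_iff_ne_empty.2 (fun h => hne (h ▸ hSP))
    have := ncard_ge_of_isKTupleDomSet hk (hdom S hSP) hSne
    rwa [Set.ncard_eq_toFinset_card'] at this
  have : Q.card * k ≤ ∑ S ∈ Q, S.toFinset.card := by
    calc Q.card * k = ∑ _S ∈ Q, k := by rw [Finset.sum_const, smul_eq_mul]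
    _ ≤ _ := Finset.sum_le_sum hterm
  have hfinal : Q.card * k ≤ n := by omega
  have : Q.card ≤ n / k := (Nat.le_div_iff_mul_le hk).2 hfinal
  rwa [Set.ncard_eq_toFinset_card P hPfin]

lemma exists_partition {n k : ℕ} (hk : 1 ≤ k) (hkn : k ≤ n) :
    ∃ P : Set (Set (Fin n)), IsKDomaticPartition (⊤ : SimpleGraph (Fin n)) k P ∧
      P.ncard = n / k := by
  classical
  set d := n / k with hd
  have hd1 : 1 ≤ d := (Nat.one_le_div_iff hk).2 hkn
  have hdkn : d * k ≤ n := Nat.div_mul_le_self n k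
  set f : Fin n → ℕ := fun i => min (i.val / k) (d - 1) with hf
  have hflt : ∀ i, f i < d := fun i => lt_of_le_of_lt (min_le_right _ _) (by omega)
  -- each fiber of j < d contains the block [j*k, j*k+k)
  have hblock : ∀ j < d, ∀ t < k, ∃ h : j * k + t < n, f ⟨j * k + t, h⟩ = j := by
    intro j hj t ht
    have hlt : j * k + t < n := by
      have : (j + 1) * k ≤ d * k := Nat.mul_le_mul_right k hj
      nlinarith
    refine ⟨hlt, ?_⟩
    have : (j * k + t) / k = j := by
      rw [mul_comm, Nat.mul_add_div (by omega : 0 < k), Nat.div_eq_of_lt ht, add_zero]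
    simp only [hf, this]
    omega
  set P : Set (Set (Fin n)) := (fun j => f ⁻¹' {j}) '' Set.Iio d with hP
  have hfibne : ∀ j < d, (f ⁻¹' {j}).Nonempty := by
    intro j hj
    obtain ⟨h, hfj⟩ := hblock j hj 0 (by omega)
    exact ⟨⟨j * k + 0, h⟩, hfj⟩
  have hpart : Setoid.IsPartition P := by
    constructor
    · rintro ⟨j, hj, hjeq⟩
      have hjeq' : f ⁻¹' {j} = ∅ := hjeq
      exact Set.not_nonempty_empty (hjeq' ▸ hfibne j hj)
    · intro a
      refine ⟨f ⁻¹' {f a}, ⟨⟨f a, hflt a, rfl⟩, rfl⟩, ?_⟩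
      rintro S ⟨⟨j, _, rfl⟩, haS⟩
      have : f a = j := haS
      rw [this]
  have hfibcard : ∀ j < d, k ≤ (f ⁻¹' {j}).ncard := by
    intro j hj
    have : k ≤ (f ⁻¹' {j}).ncard := by
      have hinj : Set.InjOn (fun t : Fin k => (⟨j * k + t.val, (hblock j hj t.val t.isLt).choose⟩ : Fin n))
          Set.univ := by
        intro a _ b _ hab
        have : j * k + a.val = j * k + b.val := congrArg Fin.val hab
        exact Fin.ext (by omega)
      have hmaps : ∀ t ∈ (Set.univ : Set (Fin k)),
          (⟨j * k + t.val, (hblock j hj t.val t.isLt).choose⟩ : Fin n) ∈ f ⁻¹' {j} := by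
        intro t _
        exact (hblock j hj t.val t.isLt).choose_spec
      have := Set.ncard_le_ncard_of_injOn _ hmaps hinj (Set.toFinite _)
      simpa [Set.ncard_univ] using this
    exact this
  refine ⟨P, ⟨hpart, ?_⟩, ?_⟩
  · rintro S ⟨j, hj, rfl⟩
    exact isKTupleDomSet_of_ncard (hfibcard j hj)
  · have hinj : Set.InjOn (fun j => f ⁻¹' {j}) (Set.Iio d) := by
      intro a ha b hb hab
      obtain ⟨x, hx⟩ := hfibne a ha
      have hab' : f ⁻¹' {a} = f ⁻¹' {b} := hab
      have : x ∈ f ⁻¹' {b} := hab' ▸ hx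
      exact hx.symm.trans this
    rw [hP, Set.ncard_image_of_injOn hinj]
    simp [Set.ncard_eq_toFinset_card', hd]

/-- For every positive integers `n ≥ 1` and `k`, the `k`-tuple domatic number of the
complete graph `K_n` equals `⌊n / k⌋`. -/
theorem kDomaticNum_completeGraph (n k : ℕ) (hn : 1 ≤ n) (hk : 1 ≤ k) :
    kDomaticNum (⊤ : SimpleGraph (Fin n)) k = n / k := by
  unfold kDomaticNum
  apply le_antisymm
  · apply csSup_le'
    rintro d ⟨P, hP, rfl⟩
    exact partition_card_le hk hP
  · rcases le_or_gt k n with hkn | hkn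
    · obtain ⟨P, hP, hcard⟩ := exists_partition hk hkn
      exact le_csSup ⟨n / k, by rintro d ⟨Q, hQ, rfl⟩; exact partition_card_le hk hQ⟩
        ⟨P, hP, hcard⟩
    · simp [Nat.div_eq_of_lt hkn]
end

section
/- Let k ≥ 2 and let G be a bipartite graph with bipartition (X,Y) and minimum degree δ(G) ≥ k−1. Then the k-tuple domination number satisfies γ_{×k}(G) ≥ 2k−2, with equality if and only if G is the complete bipartite graph K_{k−1,k−1}. -/
variable {V : Type*}

/-- If `G` is a bipartite graph with bipartition `(X, Y)` and minimum degree at least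
`k - 1`, where `k ≥ 2`, then `γ_{×k}(G) ≥ 2k - 2`, with equality if and only if
`G = K_{k-1,k-1}`. -/
theorem kDomNum_bipartite [Fintype V] [Nonempty V] [DecidableEq V] (G : SimpleGraph V)
    [DecidableRel G.Adj] (k : ℕ) (hk : 2 ≤ k) (X Y : Set V)
    (hcover : X ∪ Y = Set.univ) (hdisj : Disjoint X Y)
    (hbip : ∀ u v, G.Adj u v → (u ∈ X ∧ v ∈ Y) ∨ (u ∈ Y ∧ v ∈ X))
    (hδ : k - 1 ≤ G.minDegree) :
    2 * k - 2 ≤ kDomNum G k ∧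
      (kDomNum G k = 2 * k - 2 ↔
        (X.ncard = k - 1 ∧ Y.ncard = k - 1 ∧ ∀ x ∈ X, ∀ y ∈ Y, G.Adj x y)) := by
  classical
  have hfin : ∀ s : Set V, s.Finite := fun s => s.toFinite
  -- the universe is always a k-tuple dominating set, by the minimum degree hypothesis
  have hVdom : IsKTupleDomSet G k (Set.univ : Set V) := by
    refine ⟨fun v hv => absurd (Set.mem_univ v) hv, fun v _ => ?_⟩
    have h1 : k - 1 ≤ G.degree v := hδ.trans (G.minDegree_le_degree v)
    have h2 : (Set.univ ∩ G.neighborSet v).ncard = G.degree v := by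
      rw [Set.univ_inter, Set.ncard_eq_toFinset_card']
      simp [SimpleGraph.neighborFinset_def, SimpleGraph.degree]
    omega
  -- neighbors of vertices of X lie in Y, and vice versa
  have hNX : ∀ S : Set V, ∀ a ∈ X, S ∩ G.neighborSet a ⊆ S ∩ Y := by
    rintro S a haX u ⟨huS, huN⟩
    rcases hbip a u huN with ⟨_, huY⟩ | ⟨haY, _⟩
    · exact ⟨huS, huY⟩
    · exact absurd haY (Set.disjoint_left.1 hdisj haX)
  have hNY : ∀ S : Set V, ∀ b ∈ Y, S ∩ G.neighborSet b ⊆ S ∩ X := by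
    rintro S b hbY u ⟨huS, huN⟩
    rcases hbip b u huN with ⟨hbX, _⟩ | ⟨_, huX⟩
    · exact absurd hbY (Set.disjoint_left.1 hdisj hbX)
    · exact ⟨huS, huX⟩
  -- key estimates for any dominating set
  have key : ∀ S : Set V, IsKTupleDomSet G k S →
      k - 1 ≤ (S ∩ X).ncard ∧ k - 1 ≤ (S ∩ Y).ncard := by
    intro S hS
    have hSne : S.Nonempty := by
      by_contra h
      rw [Set.not_nonempty_iff_eq_empty] at h
      obtain ⟨v⟩ := ‹Nonempty V›
      have := hS.1 v (by simp [h])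
      simp [h] at this
      omega
    obtain ⟨v, hv⟩ := hSne
    have h1 : k - 1 ≤ (S ∩ G.neighborSet v).ncard := hS.2 v hv
    have hne : (S ∩ G.neighborSet v).Nonempty := by
      rw [Set.nonempty_iff_ne_empty]
      intro h
      rw [h, Set.ncard_empty] at h1
      omega
    obtain ⟨w, hwS, hwN⟩ := hne
    have hadj : G.Adj v w := hwN
    have habxy : ∃ a b, a ∈ S ∩ X ∧ b ∈ S ∩ Y := by
      rcases hbip v w hadj with ⟨hvX, hwY⟩ | ⟨hvY, hwX⟩
      · exact ⟨v, w, ⟨hv, hvX⟩, ⟨hwS, hwY⟩⟩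
      · exact ⟨w, v, ⟨hwS, hwX⟩, ⟨hv, hvY⟩⟩
    obtain ⟨a, b, ⟨haS, haX⟩, hbS, hbY⟩ := habxy
    constructor
    · exact le_trans (hS.2 b hbS) (Set.ncard_le_ncard (hNY S b hbY) (hfin _))
    · exact le_trans (hS.2 a haS) (Set.ncard_le_ncard (hNX S a haX) (hfin _))
  -- cardinality splitting along the bipartition
  have split : ∀ S : Set V, S.ncard = (S ∩ X).ncard + (S ∩ Y).ncard := by
    intro S
    rw [← Set.ncard_union_eq (hdisj.mono Set.inter_subset_right Set.inter_subset_right)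
      (hfin _) (hfin _), ← Set.inter_union_distrib_left, hcover, Set.inter_univ]
  have hTne : Set.Nonempty {m | ∃ S : Set V, IsKTupleDomSet G k S ∧ S.ncard = m} :=
    ⟨(Set.univ : Set V).ncard, Set.univ, hVdom, rfl⟩
  have hmem : ∃ S : Set V, IsKTupleDomSet G k S ∧ S.ncard = kDomNum G k :=
    Nat.sInf_mem hTne
  obtain ⟨S, hS, hScard⟩ := hmem
  obtain ⟨hSX, hSY⟩ := key S hS
  have hsplit := split S
  have h1 : 2 * k - 2 ≤ kDomNum G k := by omega
  refine ⟨h1, ?_, ?_⟩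
  · -- equality implies K_{k-1,k-1}
    intro heq
    have hSXcard : (S ∩ X).ncard = k - 1 := by omega
    have hSYcard : (S ∩ Y).ncard = k - 1 := by omega
    have hSuniv : S = Set.univ := by
      rw [Set.eq_univ_iff_forall]
      intro v
      by_contra hv
      have hkle := hS.1 v hv
      have hvXY : v ∈ X ∨ v ∈ Y := by
        have h := Set.mem_univ v
        rw [← hcover] at h
        exact h
      rcases hvXY with hvX | hvY
      · have := Set.ncard_le_ncard (hNX S v hvX) (hfin _)
        omega
      · have := Set.ncard_le_ncard (hNY S v hvY) (hfin _)
        omega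
    rw [hSuniv, Set.univ_inter] at hSXcard hSYcard
    refine ⟨hSXcard, hSYcard, ?_⟩
    intro x hx y hy
    have hxS : x ∈ S := hSuniv ▸ Set.mem_univ x
    have hsub : S ∩ G.neighborSet x ⊆ Y := by
      intro u hu
      have := hNX S x hx hu
      exact this.2
    have hle : Y.ncard ≤ (S ∩ G.neighborSet x).ncard := by
      have := hS.2 x hxS
      omega
    have heqset : S ∩ G.neighborSet x = Y :=
      Set.eq_of_subset_of_ncard_le hsub hle (hfin _)
    have hy' : y ∈ S ∩ G.neighborSet x := heqset ▸ hy
    exact hy'.2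
  · -- K_{k-1,k-1} implies equality
    rintro ⟨hX, hY, _⟩
    have hucard : (Set.univ : Set V).ncard = 2 * k - 2 := by
      rw [← hcover, Set.ncard_union_eq hdisj (hfin _) (hfin _)]
      omega
    have hle : kDomNum G k ≤ 2 * k - 2 :=
      Nat.sInf_le ⟨Set.univ, hVdom, hucard⟩
    omega
end

section
/- Let k ≥ 2 and let G be a bipartite graph of order n with bipartition (X,Y) and minimum degree δ(G) ≥ k−1. Then d_{×k}(G) ≤ n/(2k−2), with equality if and only if G = K_{k−1,k−1}. -/
variable {V : Type*}

lemma ncard_sUnion_finset {α : Type*} [Finite α] (t : Finset (Set α))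
    (h : (t : Set (Set α)).PairwiseDisjoint id) :
    (⋃₀ (t : Set (Set α))).ncard = ∑ S ∈ t, S.ncard := by
  classical
  induction t using Finset.induction_on with
  | empty => simp
  | @insert a s ha ih =>
    have hd : Disjoint a (⋃₀ (s : Set (Set α))) := by
      rw [Set.disjoint_sUnion_right]
      intro b hb
      exact h (by simp) (by simp [hb]) (by rintro rfl; exact ha hb)
    rw [Finset.coe_insert, Set.sUnion_insert,
      Set.ncard_union_eq hd (Set.toFinite _) (Set.toFinite _), Finset.sum_insert ha,
      ih (h.subset (by simp))]

lemma side_bound [Finite V] (G : SimpleGraph V) (k : ℕ) (S X Y : Set V) (hdisj : Disjoint X Y)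
    (hbip : ∀ u v, G.Adj u v → (u ∈ X ∧ v ∈ Y) ∨ (u ∈ Y ∧ v ∈ X))
    (hS : IsKTupleDomSet G k S) {w : V} (hw : w ∈ S) (hwY : w ∈ Y) :
    k - 1 ≤ (S ∩ X).ncard := by
  have h1 := hS.2 w hw
  have hsub : S ∩ G.neighborSet w ⊆ S ∩ X := by
    rintro u ⟨huS, huN⟩
    refine ⟨huS, ?_⟩
    rcases hbip w u huN with ⟨hwX, _⟩ | ⟨_, huX⟩
    · exact absurd hwX (Set.disjoint_right.mp hdisj hwY)
    · exact huX
  exact h1.trans (Set.ncard_le_ncard hsub (Set.toFinite _))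

lemma sides [Finite V] (G : SimpleGraph V) (k : ℕ) (hk : 2 ≤ k) (S X Y : Set V)
    (hdisj : Disjoint X Y)
    (hbip : ∀ u v, G.Adj u v → (u ∈ X ∧ v ∈ Y) ∨ (u ∈ Y ∧ v ∈ X))
    (hS : IsKTupleDomSet G k S) (hne : S.Nonempty) :
    k - 1 ≤ (S ∩ X).ncard ∧ k - 1 ≤ (S ∩ Y).ncard := by
  obtain ⟨v, hv⟩ := hne
  have h1 := hS.2 v hv
  have hne' : (S ∩ G.neighborSet v).Nonempty := by
    apply Set.nonempty_of_ncard_ne_zero; omega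
  obtain ⟨w, hwS, hwN⟩ := hne'
  have hbip' : ∀ u v, G.Adj u v → (u ∈ Y ∧ v ∈ X) ∨ (u ∈ X ∧ v ∈ Y) :=
    fun u v h => (hbip u v h).symm
  rcases hbip v w hwN with ⟨hvX, hwY⟩ | ⟨hvY, hwX⟩
  · exact ⟨side_bound G k S X Y hdisj hbip hS hwS hwY,
      side_bound G k S Y X hdisj.symm hbip' hS hv hvX⟩
  · exact ⟨side_bound G k S X Y hdisj hbip hS hv hvY,
      side_bound G k S Y X hdisj.symm hbip' hS hwS hwX⟩

lemma class_ncard [Finite V] (G : SimpleGraph V) (k : ℕ) (hk : 2 ≤ k) (S X Y : Set V)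
    (hcover : X ∪ Y = Set.univ) (hdisj : Disjoint X Y)
    (hbip : ∀ u v, G.Adj u v → (u ∈ X ∧ v ∈ Y) ∨ (u ∈ Y ∧ v ∈ X))
    (hS : IsKTupleDomSet G k S) (hne : S.Nonempty) :
    S.ncard = (S ∩ X).ncard + (S ∩ Y).ncard ∧ 2 * (k - 1) ≤ S.ncard := by
  have hsplit : S = (S ∩ X) ∪ (S ∩ Y) := by
    rw [← Set.inter_union_distrib_left, hcover, Set.inter_univ]
  have hd : Disjoint (S ∩ X) (S ∩ Y) :=
    hdisj.mono Set.inter_subset_right Set.inter_subset_right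
  have hsum : S.ncard = (S ∩ X).ncard + (S ∩ Y).ncard := by
    conv_lhs => rw [hsplit]
    exact Set.ncard_union_eq hd (Set.toFinite _) (Set.toFinite _)
  obtain ⟨hx, hy⟩ := sides G k hk S X Y hdisj hbip hS hne
  exact ⟨hsum, by omega⟩

/-- If `G` is a bipartite graph of order `n` with bipartition `(X, Y)` and minimum degree
`δ(G) ≥ k - 1 ≥ 1`, where `k ≥ 2`, then `d_{×k}(G) ≤ n / (2k - 2)`, with equality if and
only if `G = K_{k-1,k-1}`. -/
theorem kDomaticNum_bipartite_le [Fintype V] [Nonempty V] [DecidableEq V]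
    (G : SimpleGraph V) [DecidableRel G.Adj] (k : ℕ) (hk : 2 ≤ k) (X Y : Set V)
    (hcover : X ∪ Y = Set.univ) (hdisj : Disjoint X Y)
    (hbip : ∀ u v, G.Adj u v → (u ∈ X ∧ v ∈ Y) ∨ (u ∈ Y ∧ v ∈ X))
    (hδ : k - 1 ≤ G.minDegree) :
    (kDomaticNum G k : ℝ) ≤ (Fintype.card V : ℝ) / (2 * (k : ℝ) - 2) ∧
      ((kDomaticNum G k : ℝ) = (Fintype.card V : ℝ) / (2 * (k : ℝ) - 2) ↔
        (X.ncard = k - 1 ∧ Y.ncard = k - 1 ∧ ∀ x ∈ X, ∀ y ∈ Y, G.Adj x y)) := by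
  classical
  set n := Fintype.card V with hn
  set m := 2 * (k - 1) with hm
  set D := {d | ∃ P : Set (Set V), IsKDomaticPartition G k P ∧ P.ncard = d} with hDdef
  have hdeg : ∀ v : V, (G.neighborSet v).ncard = G.degree v := by
    intro v
    rw [Set.ncard_eq_toFinset_card']
    simp [SimpleGraph.neighborFinset_def, SimpleGraph.degree]
  -- `{univ}` is a k-domatic partition
  have hup : IsKDomaticPartition G k {Set.univ} := by
    refine ⟨⟨by simp [Set.empty_ne_univ], fun a => ⟨Set.univ, ⟨rfl, Set.mem_univ a⟩,
      fun b hb => hb.1⟩⟩, ?_⟩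
    intro S hS
    rw [Set.mem_singleton_iff] at hS
    subst hS
    constructor
    · intro v hv; exact absurd (Set.mem_univ v) hv
    · intro v _
      rw [Set.univ_inter, hdeg v]
      exact hδ.trans (G.minDegree_le_degree v)
  have h1D : 1 ∈ D := ⟨{Set.univ}, hup, by simp⟩
  -- the key counting bound for any k-domatic partition
  have hbound : ∀ P : Set (Set V), IsKDomaticPartition G k P → P.ncard * m ≤ n := by
    rintro P ⟨hPart, hDom⟩
    have hfin : P.Finite := Set.toFinite P
    have hct : (hfin.toFinset : Set (Set V)) = P := hfin.coe_toFinset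
    have hsum : ∑ S ∈ hfin.toFinset, S.ncard = n := by
      rw [← ncard_sUnion_finset hfin.toFinset (by rw [hct]; exact hPart.pairwiseDisjoint), hct,
        hPart.sUnion_eq_univ, Set.ncard_univ, Nat.card_eq_fintype_card]
    have hPc : P.ncard = hfin.toFinset.card := Set.ncard_eq_toFinset_card _ hfin
    calc P.ncard * m = ∑ _S ∈ hfin.toFinset, m := by
          rw [Finset.sum_const, hPc, smul_eq_mul, mul_comm]
      _ ≤ ∑ S ∈ hfin.toFinset, S.ncard := by
          refine Finset.sum_le_sum fun S hS => ?_
          rw [Set.Finite.mem_toFinset] at hS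
          have hne : S.Nonempty :=
            Set.nonempty_iff_ne_empty.mpr (fun h => hPart.1 (h ▸ hS))
          exact (class_ncard G k hk S X Y hcover hdisj hbip (hDom S hS) hne).2
      _ = n := hsum
  have hbdd : BddAbove D := by
    refine ⟨n, fun d hd => ?_⟩
    obtain ⟨P, hP, rfl⟩ := hd
    have h1 := hbound P hP
    have h2 : P.ncard ≤ P.ncard * m := Nat.le_mul_of_pos_right _ (by omega)
    omega
  have hmem : kDomaticNum G k ∈ D := Nat.sSup_mem ⟨1, h1D⟩ hbdd
  set d := kDomaticNum G k with hd
  obtain ⟨P₀, hP₀, hP₀card⟩ := hmem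
  have key : d * m ≤ n := hP₀card ▸ hbound P₀ hP₀
  have hk1 : (1:ℕ) ≤ k := by omega
  have hmR : ((m : ℕ) : ℝ) = 2 * (k : ℝ) - 2 := by
    rw [hm]; push_cast [hk1]; ring
  have hmpos : (0:ℝ) < 2 * (k : ℝ) - 2 := by
    have : (2:ℝ) ≤ (k:ℝ) := by exact_mod_cast hk
    linarith
  have hineq : (d : ℝ) ≤ (n : ℝ) / (2 * (k : ℝ) - 2) := by
    rw [le_div_iff₀ hmpos, ← hmR, ← Nat.cast_mul, Nat.cast_le]
    exact key
  refine ⟨hineq, ?_, ?_⟩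
  · -- equality → K_{k-1,k-1}
    intro heq
    have hnat : d * m = n := by
      have h1 : (d : ℝ) * (2 * (k : ℝ) - 2) = (n : ℝ) := by
        rw [heq]; exact div_mul_cancel₀ _ (ne_of_gt hmpos)
      have h2 : ((d * m : ℕ) : ℝ) = (n : ℝ) := by rw [Nat.cast_mul, hmR]; exact h1
      exact_mod_cast h2
    obtain ⟨hPart, hDom⟩ := hP₀
    have hfin : P₀.Finite := Set.toFinite P₀
    have hct : (hfin.toFinset : Set (Set V)) = P₀ := hfin.coe_toFinset
    have hsum : ∑ S ∈ hfin.toFinset, S.ncard = n := by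
      rw [← ncard_sUnion_finset hfin.toFinset (by rw [hct]; exact hPart.pairwiseDisjoint), hct,
        hPart.sUnion_eq_univ, Set.ncard_univ, Nat.card_eq_fintype_card]
    have hPc : P₀.ncard = hfin.toFinset.card := Set.ncard_eq_toFinset_card _ hfin
    -- every class has ncard exactly m, hence splits as k-1 / k-1
    have hclassne : ∀ S ∈ P₀, S.Nonempty := fun S hS =>
      Set.nonempty_iff_ne_empty.mpr (fun h => hPart.1 (h ▸ hS))
    have hexact : ∀ S ∈ P₀, (S ∩ X).ncard = k - 1 ∧ (S ∩ Y).ncard = k - 1 := by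
      have hall : ∀ S ∈ hfin.toFinset, m = S.ncard := by
        rw [← Finset.sum_eq_sum_iff_of_le]
        · rw [hsum, Finset.sum_const, smul_eq_mul, ← hPc, hP₀card, hnat]
        · intro S hS
          rw [Set.Finite.mem_toFinset] at hS
          exact (class_ncard G k hk S X Y hcover hdisj hbip (hDom S hS) (hclassne S hS)).2
      intro S hS
      have h1 := hall S (hfin.mem_toFinset.mpr hS)
      have h2 := class_ncard G k hk S X Y hcover hdisj hbip (hDom S hS) (hclassne S hS)
      obtain ⟨hx, hy⟩ := sides G k hk S X Y hdisj hbip (hDom S hS) (hclassne S hS)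
      omega
    -- there is only one class
    obtain ⟨S₀, hS₀⟩ : P₀.Nonempty := by
      obtain ⟨b, ⟨hb, _⟩, _⟩ := hPart.2 (Classical.arbitrary V)
      exact ⟨b, hb⟩
    have huniq : ∀ S ∈ P₀, S = S₀ := by
      intro S hS
      by_contra hne
      obtain ⟨v, hvS₀, hvX⟩ : (S₀ ∩ X).Nonempty := by
        apply Set.nonempty_of_ncard_ne_zero
        have := (hexact S₀ hS₀).1
        omega
      have hvnS : v ∉ S := fun hv =>
        Set.disjoint_left.mp (hPart.pairwiseDisjoint hS hS₀ hne) hv hvS₀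
      have h1 := (hDom S hS).1 v hvnS
      have hsub : S ∩ G.neighborSet v ⊆ S ∩ Y := by
        rintro u ⟨huS, huN⟩
        refine ⟨huS, ?_⟩
        rcases hbip v u huN with ⟨_, huY⟩ | ⟨hvY, _⟩
        · exact huY
        · exact absurd hvY (Set.disjoint_left.mp hdisj hvX)
      have h2 := Set.ncard_le_ncard hsub (Set.toFinite _)
      have h3 := (hexact S hS).2
      omega
    have hP₀eq : P₀ = {S₀} := Set.eq_singleton_iff_unique_mem.mpr ⟨hS₀, huniq⟩
    have hS₀univ : S₀ = Set.univ := by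
      have := hPart.sUnion_eq_univ
      rwa [hP₀eq, Set.sUnion_singleton] at this
    subst hS₀univ
    have hXc : X.ncard = k - 1 := by
      have := (hexact _ hS₀).1; rwa [Set.univ_inter] at this
    have hYc : Y.ncard = k - 1 := by
      have := (hexact _ hS₀).2; rwa [Set.univ_inter] at this
    refine ⟨hXc, hYc, ?_⟩
    intro x hx y hy
    have h1 := (hDom _ hS₀).2 x (Set.mem_univ x)
    rw [Set.univ_inter] at h1
    have hsub : G.neighborSet x ⊆ Y := by
      intro u huN
      rcases hbip x u huN with ⟨_, huY⟩ | ⟨hxY, _⟩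
      · exact huY
      · exact absurd hxY (Set.disjoint_left.mp hdisj hx)
    have hNeq : G.neighborSet x = Y := by
      apply Set.eq_of_subset_of_ncard_le hsub _ (Set.toFinite _)
      omega
    rw [← SimpleGraph.mem_neighborSet, hNeq]
    exact hy
  · -- K_{k-1,k-1} → equality
    rintro ⟨hX, hY, _hadj⟩
    have hnm : n = m := by
      have h1 : n = X.ncard + Y.ncard := by
        rw [hn, ← Nat.card_eq_fintype_card, ← Set.ncard_univ, ← hcover,
          Set.ncard_union_eq hdisj (Set.toFinite _) (Set.toFinite _)]
      omega
    have hd1 : d ≤ 1 := by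
      have h2 : d * m ≤ 1 * m := by rw [one_mul]; exact key.trans (le_of_eq hnm)
      exact Nat.le_of_mul_le_mul_right h2 (by omega)
    have hdge : 1 ≤ d := le_csSup hbdd h1D
    have hdeq : d = 1 := le_antisymm hd1 hdge
    rw [hdeq, hnm]
    rw [Nat.cast_one, hmR, eq_comm, div_eq_one_iff_eq (ne_of_gt hmpos)]
end

section
/- If G is a finite simple graph of order n with minimum degree δ(G) ≥ k−1 ≥ 2, where k ≥ 3 is an integer, then γ_{×k}(G) + d_{×k}(G) ≤ n + 1. -/
variable {V : Type*}

lemma ncard_biUnion_finset [Fintype V] (F : Finset (Set V))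
    (h : (F : Set (Set V)).PairwiseDisjoint id) :
    (⋃ S ∈ F, S).ncard = ∑ S ∈ F, S.ncard := by
  classical
  induction F using Finset.cons_induction with
  | empty => simp
  | cons a F ha ih =>
    rw [Finset.cons_eq_insert] at *
    rw [Finset.set_biUnion_insert, Finset.sum_insert ha,
      Set.ncard_union_eq ?_ (Set.toFinite _) (Set.toFinite _),
      ih (h.subset (by simp [Set.subset_insert]))]
    exact Set.disjoint_iUnion₂_right.mpr fun S hS =>
      h (by simp) (by simp [hS]) (fun e => ha (e ▸ hS))

/-- If `G` is a graph of order `n` with minimum degree `δ(G) ≥ k - 1 ≥ 2`, where `k ≥ 3`,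
then `γ_{×k}(G) + d_{×k}(G) ≤ n + 1`. -/
theorem kDomNum_add_kDomaticNum_le [Fintype V] [Nonempty V] [DecidableEq V]
    (G : SimpleGraph V) [DecidableRel G.Adj] (k : ℕ) (hk : 3 ≤ k)
    (hδ : k - 1 ≤ G.minDegree) :
    kDomNum G k + kDomaticNum G k ≤ Fintype.card V + 1 := by
  classical
  have huniv : IsKTupleDomSet G k (Set.univ : Set V) := by
    constructor
    · intro v hv; exact absurd (Set.mem_univ v) hv
    · intro v _
      rw [Set.univ_inter]
      have : (G.neighborSet v).ncard = G.degree v := by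
        rw [Set.ncard_eq_toFinset_card', ← SimpleGraph.neighborFinset_def]
        rfl
      rw [this]
      exact le_trans hδ (G.minDegree_le_degree v)
  -- domination number facts
  have hγmem : kDomNum G k ∈ {m | ∃ S : Set V, IsKTupleDomSet G k S ∧ S.ncard = m} :=
    Nat.sInf_mem ⟨Set.univ.ncard, Set.univ, huniv, rfl⟩
  obtain ⟨S₀, hS₀, hS₀card⟩ := hγmem
  have hne : ∀ S : Set V, IsKTupleDomSet G k S → S.Nonempty := by
    intro S hS
    by_contra h
    rw [Set.not_nonempty_iff_eq_empty] at h
    obtain ⟨v⟩ := ‹Nonempty V›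
    have := hS.1 v (by simp [h])
    simp [h] at this
    omega
  have hγpos : 1 ≤ kDomNum G k := by
    rw [← hS₀card]
    exact (Set.ncard_pos (Set.toFinite _)).mpr (hne S₀ hS₀)
  have hγle : ∀ S : Set V, IsKTupleDomSet G k S → kDomNum G k ≤ S.ncard :=
    fun S hS => Nat.sInf_le ⟨S, hS, rfl⟩
  -- domatic number facts
  have hbdd : BddAbove {d | ∃ P : Set (Set V), IsKDomaticPartition G k P ∧ P.ncard = d} := by
    refine ⟨(Set.univ : Set (Set V)).ncard, fun d hd => ?_⟩
    obtain ⟨P, _, rfl⟩ := hd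
    exact Set.ncard_le_ncard (Set.subset_univ P) Set.finite_univ
  have hmem1 : (1 : ℕ) ∈ {d | ∃ P : Set (Set V), IsKDomaticPartition G k P ∧ P.ncard = d} := by
    refine ⟨{Set.univ}, ⟨⟨?_, ?_⟩, ?_⟩, by simp⟩
    · simpa using fun h => Set.univ_nonempty.ne_empty h.symm
    · intro a; exact ⟨Set.univ, by simp, by simp⟩
    · intro S hS; simp at hS; subst hS; exact huniv
  have hdmem : kDomaticNum G k ∈ {d | ∃ P : Set (Set V), IsKDomaticPartition G k P ∧ P.ncard = d} :=
    Nat.sSup_mem ⟨1, hmem1⟩ hbdd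
  have hdpos : 1 ≤ kDomaticNum G k := le_csSup hbdd hmem1
  obtain ⟨P, ⟨hpart, hdom⟩, hPcard⟩ := hdmem
  -- sum over partition
  set F := (Set.toFinite P).toFinset with hF
  have hFP : (F : Set (Set V)) = P := Set.Finite.coe_toFinset _
  have hdisj : (F : Set (Set V)).PairwiseDisjoint id := by
    rw [hFP]
    intro a ha b hb hab
    exact hpart.pairwiseDisjoint ha hb hab
  have hcover : (⋃ S ∈ F, S) = Set.univ := by
    rw [← Finset.set_biUnion_coe, ← Set.sUnion_eq_biUnion, hFP]
    exact hpart.sUnion_eq_univ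
  have hsum : ∑ S ∈ F, S.ncard = Fintype.card V := by
    rw [← ncard_biUnion_finset F hdisj, hcover, Set.ncard_univ, Nat.card_eq_fintype_card]
  have hmul : kDomaticNum G k * kDomNum G k ≤ Fintype.card V := by
    calc kDomaticNum G k * kDomNum G k = ∑ _S ∈ F, kDomNum G k := by
          rw [Finset.sum_const, smul_eq_mul, ← hPcard,
            Set.ncard_eq_toFinset_card P (Set.toFinite P)]
      _ ≤ ∑ S ∈ F, S.ncard := Finset.sum_le_sum fun S hS =>
          hγle S (hdom S ((Set.Finite.mem_toFinset _).mp hS))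
      _ = Fintype.card V := hsum
  nlinarith [hγpos, hdpos, hmul]
end

section
/- If G is a finite simple graph with minimum degree δ(G) ≥ k−1, where k is a positive integer, then d_{×k}(G) ≤ (δ(G)+1)/k. -/
variable {V : Type*}

/-- If `G` is a graph with minimum degree `δ(G) ≥ k - 1`, where `k` is a positive
integer, then `d_{×k}(G) ≤ (δ(G) + 1) / k`. -/
theorem kDomaticNum_le_minDegree_succ_div [Fintype V] [Nonempty V] [DecidableEq V]
    (G : SimpleGraph V) [DecidableRel G.Adj] (k : ℕ) (hk : 1 ≤ k)
    (hδ : k - 1 ≤ G.minDegree) :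
    (kDomaticNum G k : ℝ) ≤ ((G.minDegree : ℝ) + 1) / (k : ℝ) := by
  classical
  have hkpos : (0:ℝ) < k := by exact_mod_cast hk
  rw [le_div_iff₀ hkpos]
  obtain ⟨v, hv⟩ := G.exists_minimal_degree_vertex
  set N : Set V := insert v (G.neighborSet v) with hN
  have hvN : v ∉ G.neighborSet v := by simp
  have hNcard : N.ncard = G.minDegree + 1 := by
    rw [hN, Set.ncard_insert_of_notMem hvN (Set.toFinite _)]
    rw [Set.ncard_eq_toFinset_card', ← SimpleGraph.neighborFinset_def,
      G.card_neighborFinset_eq_degree, hv]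
  -- key bound for any domatic partition
  have key : ∀ d ∈ {d | ∃ P : Set (Set V), IsKDomaticPartition G k P ∧ P.ncard = d},
      d * k ≤ G.minDegree + 1 := by
    rintro d ⟨P, ⟨hpart, hdom⟩, rfl⟩
    have hPfin : P.Finite := Set.toFinite P
    have hinter : ∀ S ∈ P, k ≤ (S ∩ N).ncard := by
      intro S hS
      by_cases hvS : v ∈ S
      · have h1 : k - 1 ≤ (S ∩ G.neighborSet v).ncard := (hdom S hS).2 v hvS
        have hsub : insert v (S ∩ G.neighborSet v) ⊆ S ∩ N := by
          intro x hx
          rcases hx with rfl | hx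
          · exact ⟨hvS, Set.mem_insert _ _⟩
          · exact ⟨hx.1, Set.mem_insert_of_mem _ hx.2⟩
        have := Set.ncard_le_ncard hsub (Set.toFinite _)
        rw [Set.ncard_insert_of_notMem (fun h => hvN h.2) (Set.toFinite _)] at this
        omega
      · have h1 : k ≤ (S ∩ G.neighborSet v).ncard := (hdom S hS).1 v hvS
        exact h1.trans (Set.ncard_le_ncard (Set.inter_subset_inter_right _
          (Set.subset_insert _ _)) (Set.toFinite _))
    -- sum over the partition
    have hdisj : (hPfin.toFinset : Set (Set V)).PairwiseDisjoint
        (fun S => (S ∩ N).toFinset) := by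
      intro S hS T hT hST
      simp only [Set.Finite.coe_toFinset] at hS hT
      have := hpart.pairwiseDisjoint hS hT hST
      simp only [Finset.disjoint_left, Set.mem_toFinset]
      intro x hx hx'
      exact (Set.disjoint_left.mp this hx.1) hx'.1
    have hsum : P.ncard * k ≤ (hPfin.toFinset.biUnion (fun S => (S ∩ N).toFinset)).card := by
      rw [Finset.card_biUnion hdisj]
      calc P.ncard * k = ∑ _S ∈ hPfin.toFinset, k := by
            rw [Finset.sum_const, smul_eq_mul, Set.ncard_eq_toFinset_card P hPfin]
        _ ≤ ∑ S ∈ hPfin.toFinset, ((S ∩ N).toFinset.card) := by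
            apply Finset.sum_le_sum
            intro S hS
            rw [← Set.ncard_eq_toFinset_card']
            exact hinter S (hPfin.mem_toFinset.mp hS)
    have hsub2 : (hPfin.toFinset.biUnion (fun S => (S ∩ N).toFinset)) ⊆ N.toFinset := by
      intro x hx
      simp only [Finset.mem_biUnion, Set.mem_toFinset] at hx ⊢
      obtain ⟨S, _, hxS⟩ := hx
      exact hxS.2
    have := Finset.card_le_card hsub2
    rw [← Set.ncard_eq_toFinset_card', hNcard] at this
    omega
  -- conclude via sSup
  set s := {d | ∃ P : Set (Set V), IsKDomaticPartition G k P ∧ P.ncard = d} with hs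
  have hbound : kDomaticNum G k * k ≤ G.minDegree + 1 := by
    rcases Set.eq_empty_or_nonempty s with he | hne
    · rw [kDomaticNum, ← hs, he, csSup_empty]
      simp
    · have hbdd : BddAbove s := by
        refine ⟨G.minDegree + 1, fun d hd => ?_⟩
        have := key d hd
        calc d ≤ d * k := Nat.le_mul_of_pos_right d hk
          _ ≤ G.minDegree + 1 := this
      have hmem : sSup s ∈ s := Nat.sSup_mem hne hbdd
      exact key _ hmem
  exact_mod_cast hbound
end

section
/- Let G be a finite simple graph with minimum degree δ(G) ≥ k−1, where k is a positive integer. If d_{×k}(G) = (δ(G)+1)/k, then for every partition {V_1, V_2, ..., V_d} of V(G) into d = d_{×k}(G) k-tuple dominating sets and for every vertex v of degree δ(G), one has |V_i ∩ N[v]| = k for each 1 ≤ i ≤ d, where N[v] denotes the closed neighborhood of v. -/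
variable {V : Type*}

/-- Let `G` be a graph with minimum degree `δ(G) ≥ k - 1`, where `k` is a positive
integer. If `d_{×k}(G) = (δ(G) + 1) / k`, then for every partition of `V(G)` into
`d_{×k}(G)` many `k`-tuple dominating sets and every vertex `v` of degree `δ(G)`, every
class of the partition meets the closed neighborhood `N[v]` in exactly `k` vertices. -/
theorem kDomaticNum_full_inter_closedNbhd [Fintype V] [Nonempty V] [DecidableEq V]
    (G : SimpleGraph V) [DecidableRel G.Adj] (k : ℕ) (hk : 1 ≤ k)
    (hδ : k - 1 ≤ G.minDegree)
    (heq : (kDomaticNum G k : ℝ) = ((G.minDegree : ℝ) + 1) / (k : ℝ)) :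
    ∀ P : Set (Set V), IsKDomaticPartition G k P → P.ncard = kDomaticNum G k →
      ∀ v : V, G.degree v = G.minDegree →
        ∀ S ∈ P, (S ∩ insert v (G.neighborSet v)).ncard = k := by
  classical
  intro P hP hcard v hv S hS
  obtain ⟨hpart, hdom⟩ := hP
  set Nv : Set V := insert v (G.neighborSet v) with hNv
  -- cardinality of closed neighborhood
  have hvnot : v ∉ G.neighborSet v := by simp
  have hNv_card : Nv.ncard = G.minDegree + 1 := by
    rw [hNv, Set.ncard_insert_of_notMem hvnot]
    have : (G.neighborSet v).ncard = G.degree v := by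
      rw [Set.ncard_eq_toFinset_card']
      simp [SimpleGraph.degree, SimpleGraph.neighborFinset]
    rw [this, hv]
  -- lower bound for each class
  have hlow : ∀ T ∈ P, k ≤ (T ∩ Nv).ncard := by
    intro T hT
    by_cases hvT : v ∈ T
    · have hset : T ∩ Nv = insert v (T ∩ G.neighborSet v) := by
        ext x
        simp only [hNv, Set.mem_inter_iff, Set.mem_insert_iff]
        constructor
        · rintro ⟨hxT, hx | hx⟩
          · exact Or.inl hx
          · exact Or.inr ⟨hxT, hx⟩
        · rintro (rfl | ⟨h1, h2⟩)
          · exact ⟨hvT, Or.inl rfl⟩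
          · exact ⟨h1, Or.inr h2⟩
      rw [hset, Set.ncard_insert_of_notMem (by simp [hvnot])]
      have := (hdom T hT).2 v hvT
      omega
    · have hset : T ∩ Nv = T ∩ G.neighborSet v := by
        ext x
        simp only [hNv, Set.mem_inter_iff, Set.mem_insert_iff]
        constructor
        · rintro ⟨hxT, hx | hx⟩
          · exact absurd (hx ▸ hxT) hvT
          · exact ⟨hxT, hx⟩
        · rintro ⟨h1, h2⟩; exact ⟨h1, Or.inr h2⟩
      rw [hset]
      exact (hdom T hT).1 v hvT
  -- sum of intersections equals |N[v]|
  set Pf : Finset (Set V) := P.toFinset with hPf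
  have hmemPf : ∀ T : Set V, T ∈ Pf ↔ T ∈ P := by intro T; simp [hPf]
  have hdisj : ∀ T₁ ∈ Pf, ∀ T₂ ∈ Pf, T₁ ≠ T₂ →
      Disjoint ((T₁ ∩ Nv).toFinset) ((T₂ ∩ Nv).toFinset) := by
    intro T₁ h1 T₂ h2 hne
    have := hpart.pairwiseDisjoint ((hmemPf T₁).1 h1) ((hmemPf T₂).1 h2) hne
    rw [Finset.disjoint_left]
    intro a ha1 ha2
    simp only [Set.mem_toFinset, Set.mem_inter_iff] at ha1 ha2
    exact (Set.disjoint_left.1 this) ha1.1 ha2.1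
  have hbiUnion : Pf.biUnion (fun T => (T ∩ Nv).toFinset) = Nv.toFinset := by
    ext x
    simp only [Finset.mem_biUnion, Set.mem_toFinset, Set.mem_inter_iff]
    constructor
    · rintro ⟨T, _, _, hx⟩; exact hx
    · intro hx
      obtain ⟨T, ⟨hTP, hxT⟩, -⟩ := hpart.2 x
      exact ⟨T, (hmemPf T).2 hTP, hxT, hx⟩
  have hsum : ∑ T ∈ Pf, (T ∩ Nv).ncard = G.minDegree + 1 := by
    have h1 : ∑ T ∈ Pf, (T ∩ Nv).ncard = ∑ T ∈ Pf, ((T ∩ Nv).toFinset).card := by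
      apply Finset.sum_congr rfl
      intro T _
      rw [Set.ncard_eq_toFinset_card']
    rw [h1, ← Finset.card_biUnion hdisj, hbiUnion, ← Set.ncard_eq_toFinset_card', hNv_card]
  -- d * k = δ + 1
  have hk0 : (k : ℝ) ≠ 0 := by positivity
  have hdk : P.ncard * k = G.minDegree + 1 := by
    have : (P.ncard : ℝ) * k = (G.minDegree : ℝ) + 1 := by
      rw [hcard, heq]; field_simp
    exact_mod_cast this
  have hPfcard : Pf.card = P.ncard := by
    rw [hPf, Set.ncard_eq_toFinset_card']
  -- conclude each term equals k
  by_contra hne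
  have hSPf : S ∈ Pf := (hmemPf S).2 hS
  have hlt : ∑ T ∈ Pf, k < ∑ T ∈ Pf, (T ∩ Nv).ncard := by
    apply Finset.sum_lt_sum
    · intro T hT; exact hlow T ((hmemPf T).1 hT)
    · exact ⟨S, hSPf, lt_of_le_of_ne (hlow S hS) (Ne.symm hne)⟩
  rw [Finset.sum_const, smul_eq_mul, hPfcard, hsum, hdk] at hlt
  omega
end

section
/- For every finite simple graph G of order n such that min{δ(G), δ(Ḡ)} ≥ k−1, where k is a positive integer and Ḡ denotes the complement of G, one has d_{×k}(G) + d_{×k}(Ḡ) ≤ (n+1)/k. -/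
variable {V : Type*}

lemma partition_mul_le [Fintype V] [DecidableEq V] (G : SimpleGraph V) [DecidableRel G.Adj]
    (k : ℕ) (hk : 1 ≤ k) (v : V) (P : Set (Set V)) (hP : IsKDomaticPartition G k P) :
    P.ncard * k ≤ G.degree v + 1 := by
  classical
  obtain ⟨⟨hne, hcover⟩, hdom⟩ := hP
  have hfin : P.Finite := Set.toFinite P
  set N : Finset V := insert v (G.neighborFinset v) with hN
  choose f h1 h2 using fun a => (hcover a)
  have hcard : N.card = ∑ S ∈ hfin.toFinset, (N.filter fun x => f x = S).card := by
    apply Finset.card_eq_sum_card_fiberwise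
    intro x _
    exact hfin.mem_toFinset.2 (h1 x).1
  have hterm : ∀ S ∈ hfin.toFinset, k ≤ (N.filter fun x => f x = S).card := by
    intro S hS
    rw [hfin.mem_toFinset] at hS
    have hfilt : ∀ x, x ∈ N → x ∈ S → f x = S := by
      intro x _ hxS
      exact (h2 x S ⟨hS, hxS⟩).symm
    obtain ⟨hd1, hd2⟩ := hdom S hS
    by_cases hv : v ∈ S
    · have hle := hd2 v hv
      have hsfin : (S ∩ G.neighborSet v).Finite := Set.toFinite _
      have hsub : insert v hsfin.toFinset ⊆ N.filter fun x => f x = S := by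
        intro x hx
        rcases Finset.mem_insert.1 hx with rfl | hx
        · exact Finset.mem_filter.2 ⟨Finset.mem_insert_self _ _,
            hfilt _ (Finset.mem_insert_self _ _) hv⟩
        · rw [hsfin.mem_toFinset] at hx
          have hxN : x ∈ N := Finset.mem_insert_of_mem (G.mem_neighborFinset v x |>.2 hx.2)
          exact Finset.mem_filter.2 ⟨hxN, hfilt _ hxN hx.1⟩
      have hvn : v ∉ hsfin.toFinset := by
        rw [hsfin.mem_toFinset]
        exact fun h => G.irrefl h.2
      have := Finset.card_le_card hsub
      rw [Finset.card_insert_of_notMem hvn] at this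
      have hnc : (S ∩ G.neighborSet v).ncard = hsfin.toFinset.card :=
        Set.ncard_eq_toFinset_card _ hsfin
      omega
    · have hle := hd1 v hv
      have hsfin : (S ∩ G.neighborSet v).Finite := Set.toFinite _
      have hsub : hsfin.toFinset ⊆ N.filter fun x => f x = S := by
        intro x hx
        rw [hsfin.mem_toFinset] at hx
        have hxN : x ∈ N := Finset.mem_insert_of_mem (G.mem_neighborFinset v x |>.2 hx.2)
        exact Finset.mem_filter.2 ⟨hxN, hfilt _ hxN hx.1⟩
      have := Finset.card_le_card hsub
      have hnc : (S ∩ G.neighborSet v).ncard = hsfin.toFinset.card :=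
        Set.ncard_eq_toFinset_card _ hsfin
      omega
  have hsum : hfin.toFinset.card * k ≤ ∑ S ∈ hfin.toFinset, (N.filter fun x => f x = S).card := by
    calc hfin.toFinset.card * k = ∑ _S ∈ hfin.toFinset, k := by
          rw [Finset.sum_const, smul_eq_mul]
      _ ≤ _ := Finset.sum_le_sum hterm
  have hNcard : N.card = G.degree v + 1 := by
    rw [hN, Finset.card_insert_of_notMem (by simp), SimpleGraph.card_neighborFinset_eq_degree]
  have hPn : P.ncard = hfin.toFinset.card := Set.ncard_eq_toFinset_card _ hfin
  rw [hPn]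
  omega

lemma kDomaticNum_mul_le [Fintype V] [DecidableEq V] (G : SimpleGraph V) [DecidableRel G.Adj]
    (k : ℕ) (hk : 1 ≤ k) (v : V) : kDomaticNum G k * k ≤ G.degree v + 1 := by
  have h : kDomaticNum G k ≤ (G.degree v + 1) / k := by
    apply csSup_le'
    rintro d ⟨P, hP, rfl⟩
    exact (Nat.le_div_iff_mul_le (by omega)).2 (partition_mul_le G k hk v P hP)
  calc kDomaticNum G k * k ≤ ((G.degree v + 1) / k) * k := Nat.mul_le_mul_right _ h
    _ ≤ _ := Nat.div_mul_le_self _ _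

/-- For every graph `G` of order `n` with `min {δ(G), δ(Ḡ)} ≥ k - 1`, where `k` is a
positive integer, `d_{×k}(G) + d_{×k}(Ḡ) ≤ (n + 1) / k`. -/
theorem kDomaticNum_add_compl_le [Fintype V] [Nonempty V] [DecidableEq V]
    (G : SimpleGraph V) [DecidableRel G.Adj] (k : ℕ) (hk : 1 ≤ k)
    (hδ : k - 1 ≤ G.minDegree) (hδc : k - 1 ≤ Gᶜ.minDegree) :
    (kDomaticNum G k : ℝ) + (kDomaticNum Gᶜ k : ℝ) ≤ ((Fintype.card V : ℝ) + 1) / (k : ℝ) := by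
  classical
  obtain ⟨v⟩ := (inferInstance : Nonempty V)
  have ha := kDomaticNum_mul_le G k hk v
  have hb := kDomaticNum_mul_le Gᶜ k hk v
  have hdc : Gᶜ.degree v = Fintype.card V - 1 - G.degree v := by
    convert G.degree_compl v <;> infer_instance
  have hlt : G.degree v < Fintype.card V := G.degree_lt_card_verts v
  have hnat : (kDomaticNum G k + kDomaticNum Gᶜ k) * k ≤ Fintype.card V + 1 := by
    rw [Nat.add_mul]
    omega
  have hk' : (0 : ℝ) < (k : ℝ) := by exact_mod_cast hk
  rw [le_div_iff₀ hk']
  have := (Nat.cast_le (α := ℝ)).2 hnat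
  push_cast at this ⊢
  linarith
end

section
/- For every finite simple graph G of order n with minimum degree δ(G) ≥ k−1, where k is a positive integer, d_{×k}(G) ≥ ⌊ n / (k(n − δ(G))) ⌋. -/
variable {V : Type*}

lemma ncard_neighborSet [Fintype V] (G : SimpleGraph V) [DecidableRel G.Adj] (v : V) :
    (G.neighborSet v).ncard = G.degree v := by
  rw [← Nat.card_coe_set_eq, Nat.card_eq_fintype_card, G.card_neighborSet_eq_degree]

lemma isKTupleDomSet_of_large [Fintype V] [Nonempty V] (G : SimpleGraph V)
    [DecidableRel G.Adj] (k : ℕ)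
    (S : Set V) (hS : k * (Fintype.card V - G.minDegree) ≤ S.ncard) :
    IsKTupleDomSet G k S := by
  rcases Nat.eq_zero_or_pos k with rfl | hk
  · exact ⟨fun v _ => Nat.zero_le _, fun v _ => Nat.zero_le _⟩
  obtain ⟨k', rfl⟩ : ∃ k', k = k' + 1 := ⟨k - 1, by omega⟩
  have hδn : G.minDegree + 1 ≤ Fintype.card V := by
    obtain ⟨v⟩ := ‹Nonempty V›
    have h1 := G.minDegree_le_degree v
    have h2 := G.degree_lt_card_verts v
    omega
  have hkd : (k' + 1) * (Fintype.card V - G.minDegree)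
      = k' * (Fintype.card V - G.minDegree) + (Fintype.card V - G.minDegree) := by ring
  have hk'd : k' ≤ k' * (Fintype.card V - G.minDegree) :=
    Nat.le_mul_of_pos_right k' (by omega)
  constructor
  · intro v hv
    have key : (S ∩ G.neighborSet v).ncard + (S \ G.neighborSet v).ncard = S.ncard :=
      Set.ncard_inter_add_ncard_diff_eq_ncard S _ (Set.toFinite S)
    have hdisj : Disjoint (S \ G.neighborSet v) (insert v (G.neighborSet v)) := by
      rw [Set.disjoint_left]
      rintro x ⟨hxS, hxN⟩ hins
      rcases Set.mem_insert_iff.mp hins with rfl | h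
      exacts [hv hxS, hxN h]
    have hub : (S \ G.neighborSet v).ncard + (G.degree v + 1) ≤ Fintype.card V := by
      have h1 := Set.ncard_union_eq hdisj (Set.toFinite _) (Set.toFinite _)
      have h2 : ((S \ G.neighborSet v) ∪ insert v (G.neighborSet v)).ncard
          ≤ (Set.univ : Set V).ncard :=
        Set.ncard_le_ncard (Set.subset_univ _) (Set.toFinite _)
      rw [Set.ncard_univ, Nat.card_eq_fintype_card] at h2
      have h3 : (insert v (G.neighborSet v)).ncard = G.degree v + 1 := by
        rw [Set.ncard_insert_of_notMem (by simp) (Set.toFinite _), ncard_neighborSet]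
      omega
    have hdeg := G.minDegree_le_degree v
    omega
  · intro v hv
    simp only [Nat.add_sub_cancel]
    have key : (S ∩ G.neighborSet v).ncard + (S \ G.neighborSet v).ncard = S.ncard :=
      Set.ncard_inter_add_ncard_diff_eq_ncard S _ (Set.toFinite S)
    have hub : (S \ G.neighborSet v).ncard + G.degree v ≤ Fintype.card V := by
      have h1 : ((S \ G.neighborSet v) ∪ G.neighborSet v).ncard
          = (S \ G.neighborSet v).ncard + (G.neighborSet v).ncard :=
        Set.ncard_union_eq Set.disjoint_sdiff_left (Set.toFinite _) (Set.toFinite _)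
      have h2 : ((S \ G.neighborSet v) ∪ G.neighborSet v).ncard
          ≤ (Set.univ : Set V).ncard :=
        Set.ncard_le_ncard (Set.subset_univ _) (Set.toFinite _)
      rw [Set.ncard_univ, Nat.card_eq_fintype_card] at h2
      rw [ncard_neighborSet] at h1
      omega
    have hdeg := G.minDegree_le_degree v
    omega

/-- For every graph `G` of order `n` with minimum degree `δ(G) ≥ k - 1`, where `k` is a
positive integer, `d_{×k}(G) ≥ ⌊n / (k (n - δ(G)))⌋`. -/
theorem kDomaticNum_lower_bound [Fintype V] [Nonempty V] [DecidableEq V]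
    (G : SimpleGraph V) [DecidableRel G.Adj] (k : ℕ) (hk : 1 ≤ k)
    (hδ : k - 1 ≤ G.minDegree) :
    Fintype.card V / (k * (Fintype.card V - G.minDegree)) ≤ kDomaticNum G k := by
  set n := Fintype.card V with hn
  set m := k * (n - G.minDegree) with hm
  set t := n / m with ht
  rcases Nat.eq_zero_or_pos t with h0 | hpos
  · simp [h0]
  have hm1 : 1 ≤ m := by
    rcases Nat.eq_zero_or_pos m with h | h
    · rw [ht, h, Nat.div_zero] at hpos; omega
    · exact h
  have htm : t * m ≤ n := Nat.div_mul_le_self n m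
  -- the labelling function
  let e : V ≃ Fin n := Fintype.equivFin V
  let f : V → ℕ := fun v => min ((e v : ℕ) / m) (t - 1)
  have hflt : ∀ v, f v < t := fun v => lt_of_le_of_lt (min_le_right _ _) (by omega)
  -- nonemptiness of fibers
  have hfib : ∀ i < t, (f ⁻¹' {i}).Nonempty := by
    intro i hi
    have hlt : i * m < n := by
      have h1 : i + 1 ≤ t := hi
      have h2 : (i + 1) * m ≤ t * m := Nat.mul_le_mul_right m h1
      have h3 : (i + 1) * m = i * m + m := by ring
      omega
    refine ⟨e.symm ⟨i * m, hlt⟩, ?_⟩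
    simp only [f, Set.mem_preimage, Set.mem_singleton_iff, Equiv.apply_symm_apply]
    rw [Nat.mul_div_cancel i hm1]
    omega
  set P : Set (Set V) := (fun i => f ⁻¹' {i}) '' Set.Iio t with hP
  have hinj : Set.InjOn (fun i => f ⁻¹' {i}) (Set.Iio t) := by
    intro i hi j hj hij
    obtain ⟨v, hv⟩ := hfib i hi
    have hij' : f ⁻¹' {i} = f ⁻¹' {j} := hij
    have hv' : v ∈ f ⁻¹' {j} := hij' ▸ hv
    have := Set.mem_singleton_iff.mp hv
    have := Set.mem_singleton_iff.mp hv'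
    omega
  -- P is a partition
  have hpart : Setoid.IsPartition P := by
    constructor
    · rintro ⟨i, hi, hempty⟩
      obtain ⟨v, hv⟩ := hfib i hi
      have hempty' : f ⁻¹' {i} = ∅ := hempty
      rw [hempty'] at hv
      exact hv
    · intro v
      refine ⟨f ⁻¹' {f v}, ⟨⟨f v, hflt v, rfl⟩, rfl⟩, ?_⟩
      rintro S ⟨⟨i, _, rfl⟩, hvS⟩
      have : f v = i := Set.mem_singleton_iff.mp hvS
      rw [this]
  -- each fiber is large
  have hlarge : ∀ i < t, m ≤ (f ⁻¹' {i}).ncard := by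
    intro i hi
    have hbound : ∀ a : Fin m, (a : ℕ) + m * i < n := by
      intro a
      have h1 : i + 1 ≤ t := hi
      have h2 : (i + 1) * m ≤ t * m := Nat.mul_le_mul_right m h1
      have h3 : (i + 1) * m = i * m + m := by ring
      have h4 : m * i = i * m := Nat.mul_comm m i
      have := a.isLt
      omega
    set g : Fin m → V := fun a => e.symm ⟨(a : ℕ) + m * i, hbound a⟩ with hg
    have hginj : Function.Injective g := by
      intro a b hab
      have := e.symm.injective hab
      have h2 : (a : ℕ) + m * i = (b : ℕ) + m * i := congrArg Fin.val this
      exact Fin.ext (by omega)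
    have hrange : Set.range g ⊆ f ⁻¹' {i} := by
      rintro x ⟨a, rfl⟩
      simp only [g, f, Set.mem_preimage, Set.mem_singleton_iff, Equiv.apply_symm_apply]
      rw [Nat.add_mul_div_left _ _ hm1, Nat.div_eq_of_lt a.isLt]
      omega
    have hcard : (Set.range g).ncard = m := by
      rw [← Nat.card_coe_set_eq, Nat.card_range_of_injective hginj,
        Nat.card_eq_fintype_card, Fintype.card_fin]
    rw [← hcard]
    exact Set.ncard_le_ncard hrange (Set.toFinite _)
  -- P is a k-domatic partition
  have hdom : IsKDomaticPartition G k P := by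
    refine ⟨hpart, ?_⟩
    rintro S ⟨i, hi, rfl⟩
    exact isKTupleDomSet_of_large G k _ (le_trans (by rw [hm]) (hlarge i hi))
  have hPcard : P.ncard = t := by
    rw [hP, Set.ncard_image_of_injOn hinj, ← Finset.coe_Iio, Set.ncard_coe_finset,
      Nat.card_Iio]
  have hbdd : BddAbove {d | ∃ P : Set (Set V), IsKDomaticPartition G k P ∧ P.ncard = d} := by
    refine ⟨Nat.card (Set V), ?_⟩
    rintro d ⟨Q, _, rfl⟩
    rw [← Set.ncard_univ]
    exact Set.ncard_le_ncard (Set.subset_univ Q) (Set.toFinite _)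
  exact le_csSup hbdd ⟨P, hdom, hPcard⟩
end
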